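/- In Cl(7,0), with Φ_O = e₁₂₃ + e₁₄₅ + e₁₆₇ − e₂₄₆ + e₂₅₇ + e₃₄₇ + e₃₅₆, the element ρ_O = (1/4)(3·e₁₂₃₄₅₆₇ + Φ_O) satisfies ρ_O² = −1; in particular ρ_O is invertible with inverse −ρ_O. -/
import Mathlib


open CliffordAlgebra

noncomputable def Q7 : QuadraticForm ℝ (Fin 7 → ℝ) :=
  QuadraticMap.weightedSumSquares ℝ (fun _ : Fin 7 => (1 : ℝ))

/-- `e i` is the `i`-th orthonormal generator of Cl(7,0) (so `e 0` is e₁, …, `e 6` is e₇). -/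
noncomputable def e (i : Fin 7) : CliffordAlgebra Q7 := ι Q7 (Pi.single i 1)
noncomputable def ΦO : CliffordAlgebra Q7 :=
  e 0 * e 1 * e 2 + e 0 * e 3 * e 4 + e 0 * e 5 * e 6 - e 1 * e 3 * e 5 +
    e 1 * e 4 * e 6 + e 2 * e 3 * e 6 + e 2 * e 4 * e 5

noncomputable def ρO : CliffordAlgebra Q7 :=
  (1 / 4 : ℝ) • (3 * (e 0 * e 1 * e 2 * e 3 * e 4 * e 5 * e 6) + ΦO)

lemma Q7_single (i : Fin 7) : Q7 (Pi.single i 1) = 1 := by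
  simp [Q7, QuadraticMap.weightedSumSquares_apply, Pi.single_apply]

lemma e_sq (i : Fin 7) : e i * e i = 1 := by
  rw [e, ι_sq_scalar, Q7_single, map_one]

lemma e_swap {i j : Fin 7} (h : i ≠ j) : e i * e j = -(e j * e i) := by
  have hp : QuadraticMap.polar Q7 (Pi.single i 1) (Pi.single j 1) = 0 := by
    rw [QuadraticMap.polar]
    have : Q7 (Pi.single i 1 + Pi.single j 1) = 2 := by
      simp [Q7, QuadraticMap.weightedSumSquares_apply, Pi.single_apply, add_mul, mul_ite,
        Finset.sum_add_distrib, h, (Ne.symm h)]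
      norm_num
    rw [this, Q7_single, Q7_single]; norm_num
  have hh := CliffordAlgebra.ι_mul_ι_add_swap (Q := Q7) (Pi.single i 1) (Pi.single j 1)
  rw [hp, map_zero] at hh
  rw [e, e, eq_neg_iff_add_eq_zero, hh]

lemma e_swap' {i j : Fin 7} (h : j < i) : e i * e j = -(e j * e i) :=
  e_swap (ne_of_gt h)

lemma e_swap'' {i j : Fin 7} (x : CliffordAlgebra Q7) (h : j < i) :
    e i * (e j * x) = -(e j * (e i * x)) := by
  rw [← mul_assoc, e_swap' h, neg_mul, mul_assoc]

lemma e_sq' (i : Fin 7) (x : CliffordAlgebra Q7) : e i * (e i * x) = x := by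
  rw [← mul_assoc, e_sq, one_mul]

set_option maxHeartbeats 4000000 in
theorem stmt8 : ρO ^ 2 = -1 ∧ ρO * (-ρO) = 1 ∧ (-ρO) * ρO = 1 := by
  have key : ρO ^ 2 = -1 := by
    rw [pow_two, ρO, smul_mul_smul_comm, ΦO]
    rw [show (1/4 : ℝ) * (1/4) = 1/16 by norm_num]
    rw [show (3 : CliffordAlgebra Q7) = algebraMap ℝ _ 3 from (map_ofNat (algebraMap ℝ (CliffordAlgebra Q7)) 3).symm,
      ← Algebra.smul_def]
    simp only [smul_mul_assoc, mul_smul_comm, sub_eq_add_neg, add_mul, mul_add,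
      neg_mul, mul_neg, neg_neg, smul_add, smul_neg, mul_assoc]
    simp (config := { decide := true }) only [e_swap'', e_sq', e_sq, mul_one, one_mul,
      mul_neg, neg_neg, smul_neg, e_swap']
    rw [show ((-1 : CliffordAlgebra Q7)) = (-1:ℝ) • (1 : CliffordAlgebra Q7) by
      simp]
    module
  refine ⟨key, ?_, ?_⟩
  · rw [mul_neg, ← pow_two, key, neg_neg]
  · rw [neg_mul, ← pow_two, key, neg_neg]
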